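/- arXiv:0905.0064 — 2 statements merged into one kernel-verified Lean document; each statement's English description precedes it below -/
import Mathlib

section
/- The set of thin cuts of a cut system is itself a cut system. -/
variable {V : Type*}

/-- The boundary `NC` of a vertex set: vertices outside `C` adjacent to `C`. -/
def bdry (G : SimpleGraph V) (C : Set V) : Set V :=
  {v | v ∉ C ∧ ∃ u ∈ C, G.Adj u v}

/-- The `*`-complement: `C* = VX \ (C ∪ NC)`. -/
def cstar (G : SimpleGraph V) (C : Set V) : Set V :=
  (C ∪ bdry G C)ᶜ

/-- A set of vertices is connected if its induced subgraph is connected. -/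
def ConnSet (G : SimpleGraph V) (C : Set V) : Prop :=
  (G.induce C).Connected

/-- `Q` is a component of `A`: a maximal connected subset of `A`. -/
def IsCompOf (G : SimpleGraph V) (Q A : Set V) : Prop :=
  Q ⊆ A ∧ ConnSet G Q ∧ ∀ R : Set V, Q ⊆ R → R ⊆ A → ConnSet G R → R = Q

/-- `A`, `B` form a pair of opposite corners of `C` and `D`. -/
def OppCorners (G : SimpleGraph V) (C D A B : Set V) : Prop :=
  (A = C ∩ D ∧ B = cstar G C ∩ cstar G D) ∨
  (A = cstar G C ∩ cstar G D ∧ B = C ∩ D) ∨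
  (A = C ∩ cstar G D ∧ B = cstar G C ∩ D) ∨
  (A = cstar G C ∩ D ∧ B = C ∩ cstar G D)

/-- Cut system (Definition 2.1). -/
structure IsCutSystem (G : SimpleGraph V) (𝒞 : Set (Set V)) : Prop where
  nonempty : ∀ C ∈ 𝒞, C.Nonempty
  conn : ∀ C ∈ 𝒞, ConnSet G C
  finBd : ∀ C ∈ 𝒞, (bdry G C).Finite
  star_star : ∀ C ∈ 𝒞, cstar G (cstar G C) = C
  a1 : ∀ C ∈ 𝒞, ∀ D ∈ 𝒞, ∀ A B : Set V, OppCorners G C D A B →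
    (∃ E ∈ 𝒞, E ⊆ A) → (∃ E ∈ 𝒞, E ⊆ B) →
    ∀ Q : Set V, (IsCompOf G Q A ∨ IsCompOf G Q B) → (∃ E ∈ 𝒞, E ⊆ Q) → Q ∈ 𝒞
  a2 : ∀ C ∈ 𝒞, ∀ D ∈ 𝒞, ∃ A B : Set V, OppCorners G C D A B ∧
    (∃ E ∈ 𝒞, E ⊆ A) ∧ (∃ E ∈ 𝒞, E ⊆ B)

/-- A thin cut system: all cuts have boundary of the minimal cardinality `κ`. -/
structure IsThinCutSystem (G : SimpleGraph V) (𝒞 : Set (Set V)) (κ : ℕ) : Prop where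
  toIsCutSystem : IsCutSystem G 𝒞
  thin : ∀ C ∈ 𝒞, (bdry G C).ncard = κ

/-- A pre-cut: a cut or the `*`-complement of a cut. -/
def PreCut (G : SimpleGraph V) (𝒞 : Set (Set V)) (E : Set V) : Prop :=
  E ∈ 𝒞 ∨ ∃ C ∈ 𝒞, E = cstar G C

/-- `A` is an isolated corner of the pair `C`, `D`: a corner containing no cut,
whose two adjacent links are empty. -/
def IsolatedCorner (G : SimpleGraph V) (𝒞 : Set (Set V)) (C D A : Set V) : Prop :=
  (¬ ∃ E ∈ 𝒞, E ⊆ A) ∧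
  ((A = C ∩ D ∧ C ∩ bdry G D = ∅ ∧ D ∩ bdry G C = ∅) ∨
   (A = C ∩ cstar G D ∧ C ∩ bdry G D = ∅ ∧ cstar G D ∩ bdry G C = ∅) ∨
   (A = cstar G C ∩ D ∧ cstar G C ∩ bdry G D = ∅ ∧ D ∩ bdry G C = ∅) ∨
   (A = cstar G C ∩ cstar G D ∧ cstar G C ∩ bdry G D = ∅ ∧ cstar G D ∩ bdry G C = ∅))

/-- Two sets are nested if they have an isolated corner. -/
def Nested (G : SimpleGraph V) (𝒞 : Set (Set V)) (C D : Set V) : Prop :=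
  ∃ A : Set V, IsolatedCorner G 𝒞 C D A

/-- A slice: a component of the complement of a separator which is not a cut. -/
def IsSlice (G : SimpleGraph V) (𝒞 : Set (Set V)) (Q : Set V) : Prop :=
  (∃ C ∈ 𝒞, IsCompOf G Q (bdry G C)ᶜ) ∧ Q ∉ 𝒞

/-- `Y` is `k`-inseparable (Definition 2.12). -/
def Insep (G : SimpleGraph V) (k : ℕ) (Y : Set V) : Prop :=
  (Y.Infinite ∨ k + 1 ≤ Y.ncard) ∧
  ∀ C : Set V, (bdry G C).Finite → (bdry G C).ncard ≤ k →
    Y ⊆ C ∪ bdry G C ∨ Y ⊆ cstar G C ∪ bdry G C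

/-- `C` separates `Y₁` from `Y₂` (Definition 2.10, one orientation). -/
def Separates (G : SimpleGraph V) (C Y₁ Y₂ : Set V) : Prop :=
  Y₁ ⊆ C ∪ bdry G C ∧ Y₂ ⊆ cstar G C ∪ bdry G C ∧
  ¬ Y₁ ⊆ bdry G C ∧ ¬ Y₂ ⊆ bdry G C

/-- The set `S` separates the vertices `x` and `y`. -/
def SepVert (G : SimpleGraph V) (S : Set V) (x y : V) : Prop :=
  x ∉ S ∧ y ∉ S ∧ ∀ K : Set V, IsCompOf G K Sᶜ → x ∈ K → y ∉ K

/-- `S` is a tight `x`-`y`-separator. -/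
def TightSep (G : SimpleGraph V) (x y : V) (S : Set V) : Prop :=
  ∃ A B : Set V, IsCompOf G A Sᶜ ∧ IsCompOf G B Sᶜ ∧ A ≠ B ∧ x ∈ A ∧ y ∈ B ∧
    ∀ s ∈ S, (∃ a ∈ A, G.Adj s a) ∧ (∃ b ∈ B, G.Adj s b)

/-- `μ(C)`: the number of cuts of the system not nested with `C`. -/
noncomputable def mu (G : SimpleGraph V) (𝒞 : Set (Set V)) (C : Set V) : ℕ :=
  {D ∈ 𝒞 | ¬ Nested G 𝒞 C D}.ncard


section aux
variable {G : SimpleGraph V}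

lemma reach_mono {s t : Set V} (hst : s ⊆ t) {a b : s}
    (hr : (G.induce s).Reachable a b) :
    (G.induce t).Reachable ⟨a, hst a.2⟩ ⟨b, hst b.2⟩ :=
  hr.map (G.induceHomOfLE hst).toHom

lemma connSet_insert {Q : Set V} {u v : V} (hQ : ConnSet G Q) (hu : u ∈ Q)
    (huv : G.Adj u v) : ConnSet G (insert v Q) := by
  by_cases hv : v ∈ Q
  · rwa [Set.insert_eq_of_mem hv]
  have hQs : Q ⊆ insert v Q := Set.subset_insert _ _
  have key : ∀ a : (insert v Q : Set V),
      (G.induce (insert v Q)).Reachable a ⟨u, hQs hu⟩ := by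
    rintro ⟨a, ha⟩
    rcases ha with rfl | haQ
    · exact SimpleGraph.Adj.reachable (by simpa using huv.symm)
    · exact reach_mono hQs (hQ.preconnected ⟨a, haQ⟩ ⟨u, hu⟩)
  rw [ConnSet, SimpleGraph.connected_iff]
  exact ⟨fun a b => (key a).trans (key b).symm, ⟨⟨u, hQs hu⟩⟩⟩

lemma exists_comp {E A : Set V} (hEA : E ⊆ A) (hE : ConnSet G E) (hne : E.Nonempty) :
    ∃ Q, IsCompOf G Q A ∧ E ⊆ Q := by
  obtain ⟨x, hxE⟩ := hne
  have hxA : x ∈ A := hEA hxE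
  set Q : Set V := {y | ∃ hy : y ∈ A, (G.induce A).Reachable ⟨x, hxA⟩ ⟨y, hy⟩} with hQdef
  have hQA : Q ⊆ A := fun y hy => hy.1
  have hxQ : x ∈ Q := ⟨hxA, SimpleGraph.Reachable.refl _⟩
  have walkQ : ∀ (a b : A), (G.induce A).Walk a b → ∀ (ha : (a : V) ∈ Q),
      ∃ hb : (b : V) ∈ Q, (G.induce Q).Reachable ⟨a, ha⟩ ⟨b, hb⟩ := by
    intro a b w
    induction w with
    | nil => exact fun ha => ⟨ha, SimpleGraph.Reachable.refl _⟩
    | @cons a c b hac p ih =>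
      intro ha
      have hcQ : (c : V) ∈ Q := by
        obtain ⟨ha', hr⟩ := ha
        exact ⟨c.2, hr.trans (SimpleGraph.Adj.reachable (by simpa using hac))⟩
      obtain ⟨hb, hr⟩ := ih hcQ
      refine ⟨hb, SimpleGraph.Reachable.trans ?_ hr⟩
      exact SimpleGraph.Adj.reachable (by simpa using hac)
  have memQ_reach : ∀ (y : V) (hy : y ∈ Q),
      (G.induce Q).Reachable ⟨x, hxQ⟩ ⟨y, hy⟩ := by
    intro y hy
    obtain ⟨hyA, hr⟩ := hy
    obtain ⟨w⟩ := hr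
    obtain ⟨hb, hr'⟩ := walkQ _ _ w hxQ
    exact hr'
  refine ⟨Q, ⟨hQA, ?_, ?_⟩, ?_⟩
  · rw [ConnSet, SimpleGraph.connected_iff]
    refine ⟨fun a b => ?_, ⟨⟨x, hxQ⟩⟩⟩
    exact ((memQ_reach a a.2).symm.trans (memQ_reach b b.2)).symm.symm
  · intro R hQR hRA hR
    apply Set.Subset.antisymm _ hQR
    intro y hyR
    have hr := hR.preconnected ⟨x, hQR hxQ⟩ ⟨y, hyR⟩
    exact ⟨hRA hyR, reach_mono hRA hr⟩
  · intro y hyE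
    have hr := hE.preconnected ⟨x, hxE⟩ ⟨y, hyE⟩
    exact ⟨hEA hyE, reach_mono hEA hr⟩

lemma isCompOf_nonempty {Q A : Set V} (hQ : IsCompOf G Q A) : Q.Nonempty := by
  obtain ⟨⟨y, hy⟩⟩ := hQ.2.1.nonempty
  exact ⟨y, hy⟩

lemma bdry_comp_subset {Q A : Set V} (hQ : IsCompOf G Q A) : bdry G Q ⊆ bdry G A := by
  rintro v ⟨hvQ, u, huQ, huv⟩
  by_cases hvA : v ∈ A
  · exfalso
    have hins : ConnSet G (insert v Q) := connSet_insert hQ.2.1 huQ huv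
    have := hQ.2.2 (insert v Q) (Set.subset_insert _ _)
      (Set.insert_subset hvA hQ.1) hins
    exact hvQ (this ▸ Set.mem_insert v Q)
  · exact ⟨hvA, u, hQ.1 huQ, huv⟩

/-- Neighbours outside `X` land in the boundary of `C`. -/
def ClosedOut (G : SimpleGraph V) (C X : Set V) : Prop :=
  ∀ ⦃u v⦄, u ∈ X → v ∉ X → G.Adj u v → v ∈ bdry G C

lemma closedOut_self (C : Set V) : ClosedOut G C C :=
  fun u v hu hv huv => ⟨hv, u, hu, huv⟩

lemma closedOut_cstar (C : Set V) : ClosedOut G C (cstar G C) := by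
  intro u v hu hv huv
  have hv' : v ∈ C ∪ bdry G C := by
    by_contra hvv; exact hv hvv
  rcases hv' with hvC | hvB
  · exact absurd (Or.inr ⟨fun huC => hu (Or.inl huC), v, hvC, huv.symm⟩) hu
  · exact hvB

lemma inter_cstar_empty (C : Set V) : C ∩ cstar G C = ∅ := by
  ext v; simp only [Set.mem_inter_iff, Set.mem_empty_iff_false, iff_false, not_and]
  intro hv hv'; exact hv' (Or.inl hv)

lemma inter_bdry_empty (C : Set V) : C ∩ bdry G C = ∅ := by
  ext v; simp only [Set.mem_inter_iff, Set.mem_empty_iff_false, iff_false, not_and]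
  exact fun hv hb => hb.1 hv

lemma cstar_inter_bdry_empty (C : Set V) : cstar G C ∩ bdry G C = ∅ := by
  ext v; simp only [Set.mem_inter_iff, Set.mem_empty_iff_false, iff_false, not_and]
  exact fun hv hb => hv (Or.inr hb)

lemma corner_bdry_subset {C D X Y : Set V} (hX : ClosedOut G C X) (hY : ClosedOut G D Y) :
    bdry G (X ∩ Y) ⊆ (bdry G C ∩ (Y ∪ bdry G D)) ∪ (X ∩ bdry G D) := by
  rintro v ⟨hv, u, ⟨huX, huY⟩, huv⟩
  by_cases hvX : v ∈ X
  · have hvY : v ∉ Y := fun hy => hv ⟨hvX, hy⟩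
    exact Or.inr ⟨hvX, hY huY hvY huv⟩
  · refine Or.inl ⟨hX huX hvX huv, ?_⟩
    by_cases hvY : v ∈ Y
    · exact Or.inl hvY
    · exact Or.inr (hY huY hvY huv)

lemma submod_core {C D X X' Y Y' : Set V}
    (hX : ClosedOut G C X) (hX' : ClosedOut G C X')
    (hY : ClosedOut G D Y) (hY' : ClosedOut G D Y')
    (hXX' : X ∩ X' = ∅) (hYY' : Y ∩ Y' = ∅)
    (hXc : X ∩ bdry G C = ∅) (hX'c : X' ∩ bdry G C = ∅)
    (hYd : Y ∩ bdry G D = ∅) (hY'd : Y' ∩ bdry G D = ∅)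
    (finC : (bdry G C).Finite) (finD : (bdry G D).Finite) :
    (bdry G (X ∩ Y)).ncard + (bdry G (X' ∩ Y')).ncard
      ≤ (bdry G C).ncard + (bdry G D).ncard := by
  set S1 := bdry G C ∩ (Y ∪ bdry G D) with hS1
  set S2 := X ∩ bdry G D with hS2
  set S1' := bdry G C ∩ (Y' ∪ bdry G D) with hS1'
  set S2' := X' ∩ bdry G D with hS2'
  have finS1 : S1.Finite := finC.subset Set.inter_subset_left
  have finS1' : S1'.Finite := finC.subset Set.inter_subset_left
  have finS2 : S2.Finite := finD.subset Set.inter_subset_right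
  have finS2' : S2'.Finite := finD.subset Set.inter_subset_right
  have hA : (bdry G (X ∩ Y)).ncard ≤ S1.ncard + S2.ncard := by
    refine le_trans (Set.ncard_le_ncard (corner_bdry_subset hX hY)
      (finS1.union finS2)) (Set.ncard_union_le _ _)
  have hB : (bdry G (X' ∩ Y')).ncard ≤ S1'.ncard + S2'.ncard := by
    refine le_trans (Set.ncard_le_ncard (corner_bdry_subset hX' hY')
      (finS1'.union finS2')) (Set.ncard_union_le _ _)
  have h1 : S1.ncard + S1'.ncard ≤ (bdry G C).ncard + (bdry G C ∩ bdry G D).ncard := by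
    rw [← Set.ncard_union_add_ncard_inter _ _ finS1 finS1']
    refine add_le_add (Set.ncard_le_ncard
      (Set.union_subset Set.inter_subset_left Set.inter_subset_left) finC) ?_
    refine Set.ncard_le_ncard ?_ (finC.inter_of_left _)
    rintro x ⟨⟨hxC, hx1⟩, ⟨_, hx2⟩⟩
    rcases hx1 with hxY | hxD
    · rcases hx2 with hxY' | hxD
      · exact absurd (show x ∈ Y ∩ Y' from ⟨hxY, hxY'⟩) (by rw [hYY']; exact id)
      · exact ⟨hxC, hxD⟩
    · exact ⟨hxC, hxD⟩
  have h2 : S2.ncard + S2'.ncard + (bdry G C ∩ bdry G D).ncard ≤ (bdry G D).ncard := by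
    have d12 : Disjoint S2 S2' := by
      rw [Set.disjoint_iff_inter_eq_empty]
      apply Set.eq_empty_of_subset_empty
      rintro x ⟨⟨hx1, hxd⟩, ⟨hx2, _⟩⟩
      exact absurd (show x ∈ X ∩ X' from ⟨hx1, hx2⟩) (by rw [hXX']; exact id)
    have d3 : Disjoint (S2 ∪ S2') (bdry G C ∩ bdry G D) := by
      rw [Set.disjoint_iff_inter_eq_empty]
      apply Set.eq_empty_of_subset_empty
      rintro x ⟨hx12, hxC, hxD⟩
      rcases hx12 with ⟨hxX, _⟩ | ⟨hxX', _⟩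
      · exact absurd (show x ∈ X ∩ bdry G C from ⟨hxX, hxC⟩) (by rw [hXc]; exact id)
      · exact absurd (show x ∈ X' ∩ bdry G C from ⟨hxX', hxC⟩) (by rw [hX'c]; exact id)
    calc S2.ncard + S2'.ncard + (bdry G C ∩ bdry G D).ncard
        = (S2 ∪ S2').ncard + (bdry G C ∩ bdry G D).ncard := by
          rw [Set.ncard_union_eq d12 finS2 finS2']
      _ = ((S2 ∪ S2') ∪ (bdry G C ∩ bdry G D)).ncard := by
          rw [Set.ncard_union_eq d3 (finS2.union finS2') (finC.inter_of_left _)]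
      _ ≤ (bdry G D).ncard := by
          refine Set.ncard_le_ncard ?_ finD
          rintro x (hx | hx)
          · rcases hx with ⟨_, hxd⟩ | ⟨_, hxd⟩ <;> exact hxd
          · exact hx.2
  omega

end aux


section aux2
variable {G : SimpleGraph V}

lemma cstar_inter_empty (C : Set V) : cstar G C ∩ C = ∅ := by
  rw [Set.inter_comm]; exact inter_cstar_empty C

lemma oppCorners_swap {C D A B : Set V} (h : OppCorners G C D A B) :
    OppCorners G C D B A := by
  rcases h with ⟨h1, h2⟩ | ⟨h1, h2⟩ | ⟨h1, h2⟩ | ⟨h1, h2⟩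
  · exact Or.inr (Or.inl ⟨h2, h1⟩)
  · exact Or.inl ⟨h2, h1⟩
  · exact Or.inr (Or.inr (Or.inr ⟨h2, h1⟩))
  · exact Or.inr (Or.inr (Or.inl ⟨h2, h1⟩))

lemma opp_facts {C D A B : Set V} (hAB : OppCorners G C D A B)
    (finC : (bdry G C).Finite) (finD : (bdry G D).Finite) :
    bdry G A ⊆ bdry G C ∪ bdry G D ∧ bdry G B ⊆ bdry G C ∪ bdry G D ∧
    (bdry G A).ncard + (bdry G B).ncard ≤ (bdry G C).ncard + (bdry G D).ncard := by
  have sub : ∀ X Y : Set V, ClosedOut G C X → ClosedOut G D Y →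
      bdry G (X ∩ Y) ⊆ bdry G C ∪ bdry G D := by
    intro X Y hX hY v hv
    rcases corner_bdry_subset hX hY hv with ⟨h1, _⟩ | ⟨_, h2⟩
    · exact Or.inl h1
    · exact Or.inr h2
  rcases hAB with ⟨rfl, rfl⟩ | ⟨rfl, rfl⟩ | ⟨rfl, rfl⟩ | ⟨rfl, rfl⟩
  · exact ⟨sub _ _ (closedOut_self C) (closedOut_self D),
      sub _ _ (closedOut_cstar C) (closedOut_cstar D),
      submod_core (closedOut_self C) (closedOut_cstar C) (closedOut_self D)
        (closedOut_cstar D) (inter_cstar_empty C) (inter_cstar_empty D)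
        (inter_bdry_empty C) (cstar_inter_bdry_empty C) (inter_bdry_empty D)
        (cstar_inter_bdry_empty D) finC finD⟩
  · exact ⟨sub _ _ (closedOut_cstar C) (closedOut_cstar D),
      sub _ _ (closedOut_self C) (closedOut_self D),
      submod_core (closedOut_cstar C) (closedOut_self C) (closedOut_cstar D)
        (closedOut_self D) (cstar_inter_empty C) (cstar_inter_empty D)
        (cstar_inter_bdry_empty C) (inter_bdry_empty C) (cstar_inter_bdry_empty D)
        (inter_bdry_empty D) finC finD⟩
  · exact ⟨sub _ _ (closedOut_self C) (closedOut_cstar D),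
      sub _ _ (closedOut_cstar C) (closedOut_self D),
      submod_core (closedOut_self C) (closedOut_cstar C) (closedOut_cstar D)
        (closedOut_self D) (inter_cstar_empty C) (cstar_inter_empty D)
        (inter_bdry_empty C) (cstar_inter_bdry_empty C) (cstar_inter_bdry_empty D)
        (inter_bdry_empty D) finC finD⟩
  · exact ⟨sub _ _ (closedOut_cstar C) (closedOut_self D),
      sub _ _ (closedOut_self C) (closedOut_cstar D),
      submod_core (closedOut_cstar C) (closedOut_self C) (closedOut_self D)
        (closedOut_cstar D) (cstar_inter_empty C) (inter_cstar_empty D)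
        (cstar_inter_bdry_empty C) (inter_bdry_empty C) (inter_bdry_empty D)
        (cstar_inter_bdry_empty D) finC finD⟩

lemma thin_comp {𝒞 : Set (Set V)} (h : IsCutSystem G 𝒞)
    {C D A B Q : Set V} (hC : C ∈ 𝒞)
    (thinC : ∀ D' ∈ 𝒞, (bdry G C).ncard ≤ (bdry G D').ncard)
    (hD : D ∈ 𝒞)
    (thinD : ∀ D' ∈ 𝒞, (bdry G D).ncard ≤ (bdry G D').ncard)
    (hAB : OppCorners G C D A B)
    (hEA : ∃ E ∈ 𝒞, E ⊆ A) (hEB : ∃ E ∈ 𝒞, E ⊆ B)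
    (hQ : IsCompOf G Q A) :
    ∀ D' ∈ 𝒞, (bdry G Q).ncard ≤ (bdry G D').ncard := by
  have finC := h.finBd C hC
  have finD := h.finBd D hD
  obtain ⟨subA, subB, hsum⟩ := opp_facts hAB finC finD
  have finA : (bdry G A).Finite := (finC.union finD).subset subA
  have finB : (bdry G B).Finite := (finC.union finD).subset subB
  obtain ⟨EB, hEB𝒞, hEBB⟩ := hEB
  obtain ⟨QB, hQB, hEBQB⟩ := exists_comp hEBB (h.conn EB hEB𝒞) (h.nonempty EB hEB𝒞)
  have hQB𝒞 : QB ∈ 𝒞 :=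
    h.a1 C hC D hD A B hAB hEA ⟨EB, hEB𝒞, hEBB⟩ QB (Or.inr hQB) ⟨EB, hEB𝒞, hEBQB⟩
  have h1 : (bdry G Q).ncard ≤ (bdry G A).ncard :=
    Set.ncard_le_ncard (bdry_comp_subset hQ) finA
  have h2 : (bdry G QB).ncard ≤ (bdry G B).ncard :=
    Set.ncard_le_ncard (bdry_comp_subset hQB) finB
  have h3 : (bdry G C).ncard ≤ (bdry G QB).ncard := thinC QB hQB𝒞
  intro D' hD'
  have h4 : (bdry G D).ncard ≤ (bdry G D').ncard := thinD D' hD'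
  omega

end aux2


theorem stmt7 (G : SimpleGraph V) (hG : G.Connected) (𝒞 : Set (Set V))
    (h : IsCutSystem G 𝒞) :
    IsCutSystem G {C | C ∈ 𝒞 ∧ ∀ D ∈ 𝒞, (bdry G C).ncard ≤ (bdry G D).ncard} := by
  constructor
  · exact fun C hC => h.nonempty C hC.1
  · exact fun C hC => h.conn C hC.1
  · exact fun C hC => h.finBd C hC.1
  · exact fun C hC => h.star_star C hC.1
  · intro C hC D hD A B hAB hEA hEB Q hQ hEQ
    obtain ⟨EA, hEA', hEAA⟩ := hEA
    obtain ⟨EB, hEB', hEBB⟩ := hEB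
    obtain ⟨EQ, hEQ', hEQQ⟩ := hEQ
    have hEA2 : ∃ E ∈ 𝒞, E ⊆ A := ⟨EA, hEA'.1, hEAA⟩
    have hEB2 : ∃ E ∈ 𝒞, E ⊆ B := ⟨EB, hEB'.1, hEBB⟩
    have hEQ2 : ∃ E ∈ 𝒞, E ⊆ Q := ⟨EQ, hEQ'.1, hEQQ⟩
    refine ⟨h.a1 C hC.1 D hD.1 A B hAB hEA2 hEB2 Q hQ hEQ2, ?_⟩
    rcases hQ with hQc | hQc
    · exact thin_comp h hC.1 hC.2 hD.1 hD.2 hAB hEA2 hEB2 hQc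
    · exact thin_comp h hC.1 hC.2 hD.1 hD.2 (oppCorners_swap hAB) hEB2 hEA2 hQc
  · intro C hC D hD
    obtain ⟨A, B, hAB, hEA, hEB⟩ := h.a2 C hC.1 D hD.1
    obtain ⟨EA, hEA', hEAA⟩ := hEA
    obtain ⟨EB, hEB', hEBB⟩ := hEB
    have hEA2 : ∃ E ∈ 𝒞, E ⊆ A := ⟨EA, hEA', hEAA⟩
    have hEB2 : ∃ E ∈ 𝒞, E ⊆ B := ⟨EB, hEB', hEBB⟩
    obtain ⟨QA, hQA, hEAQA⟩ := exists_comp hEAA (h.conn EA hEA') (h.nonempty EA hEA')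
    obtain ⟨QB, hQB, hEBQB⟩ := exists_comp hEBB (h.conn EB hEB') (h.nonempty EB hEB')
    have hQA𝒞 : QA ∈ 𝒞 :=
      h.a1 C hC.1 D hD.1 A B hAB hEA2 hEB2 QA (Or.inl hQA) ⟨EA, hEA', hEAQA⟩
    have hQB𝒞 : QB ∈ 𝒞 :=
      h.a1 C hC.1 D hD.1 A B hAB hEA2 hEB2 QB (Or.inr hQB) ⟨EB, hEB', hEBQB⟩
    refine ⟨A, B, hAB, ⟨QA, ⟨hQA𝒞, ?_⟩, hQA.1⟩, ⟨QB, ⟨hQB𝒞, ?_⟩, hQB.1⟩⟩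
    · exact thin_comp h hC.1 hC.2 hD.1 hD.2 hAB hEA2 hEB2 hQA
    · exact thin_comp h hC.1 hC.2 hD.1 hD.2 (oppCorners_swap hAB) hEB2 hEA2 hQB
end

section
/- In a thin cut system, for any pair of thin cuts exactly one of the following holds: (i) no link is empty; (ii) exactly two links are empty, they are adjacent, and their adjacent corner is isolated; (iii) all four links are empty, two opposite corners contain cuts, and at least one corner is empty. Moreover, if a corner of two thin cuts contains no cut and one of its links is empty then both its links are empty. -/
variable {V : Type*}

/-! ### Infrastructure -/

section Infra

open Set SimpleGraph

variable {G : SimpleGraph V}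

lemma mem_bdry_of_adj {C : Set V} {u v : V} (hu : u ∈ C) (hv : v ∉ C) (h : G.Adj u v) :
    v ∈ bdry G C := ⟨hv, u, hu, h⟩

lemma mem_cstar_iff {C : Set V} {v : V} :
    v ∈ cstar G C ↔ v ∉ C ∧ v ∉ bdry G C := by
  simp [cstar, not_or]

lemma side_tri (G : SimpleGraph V) (C : Set V) (v : V) :
    v ∈ C ∨ v ∈ bdry G C ∨ v ∈ cstar G C := by
  by_cases h1 : v ∈ C
  · exact Or.inl h1
  by_cases h2 : v ∈ bdry G C
  · exact Or.inr (Or.inl h2)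
  · exact Or.inr (Or.inr (mem_cstar_iff.mpr ⟨h1, h2⟩))

lemma not_adj_of_cstar {C : Set V} {u v : V} (hu : u ∈ C) (hv : v ∈ cstar G C) :
    ¬ G.Adj u v := by
  intro h
  rcases mem_cstar_iff.mp hv with ⟨h1, h2⟩
  exact h2 (mem_bdry_of_adj hu h1 h)

lemma inter_bdry_self (G : SimpleGraph V) (C : Set V) : C ∩ bdry G C = ∅ := by
  ext v; simp only [mem_inter_iff, mem_empty_iff_false, iff_false, not_and]
  intro hv hb; exact hb.1 hv

lemma cstar_inter_bdry_self (G : SimpleGraph V) (C : Set V) : cstar G C ∩ bdry G C = ∅ := by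
  ext v; simp only [mem_inter_iff, mem_empty_iff_false, iff_false, not_and]
  intro hv hb; exact (mem_cstar_iff.mp hv).2 hb

lemma cstar_inter_self (G : SimpleGraph V) (C : Set V) : cstar G C ∩ C = ∅ := by
  ext v; simp only [mem_inter_iff, mem_empty_iff_false, iff_false, not_and]
  intro hv hb; exact (mem_cstar_iff.mp hv).1 hb

/-- Inclusion hom between induced subgraphs. -/
def inclHom {Q X : Set V} (h : Q ⊆ X) : G.induce Q →g G.induce X :=
  ⟨Set.inclusion h, fun {_ _} hab => hab⟩

lemma reach_mono_s8 {Q X : Set V} (h : Q ⊆ X) {u v : V} (hu : u ∈ Q) (hv : v ∈ Q)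
    (hr : (G.induce Q).Reachable ⟨u, hu⟩ ⟨v, hv⟩) :
    (G.induce X).Reachable ⟨u, h hu⟩ ⟨v, h hv⟩ :=
  hr.map (inclHom h)

lemma walk_down {X K : Set V} (hKX : K ⊆ X) {u v : ↥X} (w : (G.induce X).Walk u v)
    (hsup : ∀ y ∈ w.support, (y : V) ∈ K) :
    (G.induce K).Reachable ⟨u, hsup u w.start_mem_support⟩ ⟨v, hsup v w.end_mem_support⟩ := by
  induction w with
  | nil => exact Reachable.refl _
  | @cons a b c h p ih =>
      have hb : (b : V) ∈ K := hsup b (by simp)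
      have ha : (a : V) ∈ K := hsup a (by simp)
      have hadj : (G.induce K).Adj ⟨(a : V), ha⟩ ⟨(b : V), hb⟩ := h
      exact hadj.reachable.trans (ih (fun y hy => hsup y (by simp [hy])))

lemma comp_exists_mem {X : Set V} {x : V} (hx : x ∈ X) :
    ∃ Q : Set V, IsCompOf G Q X ∧ x ∈ Q := by
  classical
  set Q : Set V := {y | ∃ hy : y ∈ X, (G.induce X).Reachable ⟨x, hx⟩ ⟨y, hy⟩} with hQdef
  have hQX : Q ⊆ X := fun y hy => hy.1
  have hxQ : x ∈ Q := ⟨hx, Reachable.refl _⟩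
  have key : ∀ (u : V) (hu : u ∈ Q), (G.induce Q).Reachable ⟨x, hxQ⟩ ⟨u, hu⟩ := by
    intro u hu
    obtain ⟨huX, hr⟩ := hu
    obtain ⟨w⟩ := hr
    have hsup : ∀ y ∈ w.support, (y : V) ∈ Q := by
      intro y hy
      exact ⟨y.2, ⟨w.takeUntil y hy⟩⟩
    exact walk_down hQX w hsup
  refine ⟨Q, ⟨hQX, ?_, ?_⟩, hxQ⟩
  · rw [ConnSet, SimpleGraph.connected_iff]
    refine ⟨?_, ⟨⟨x, hxQ⟩⟩⟩
    rintro ⟨u, hu⟩ ⟨v, hv⟩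
    exact (key u hu).symm.trans (key v hv)
  · intro R hQR hRX hRconn
    refine Subset.antisymm ?_ hQR
    intro r hr
    have hxR : x ∈ R := hQR hxQ
    have hre : (G.induce R).Reachable ⟨x, hxR⟩ ⟨r, hr⟩ := hRconn.preconnected _ _
    exact ⟨hRX hr, reach_mono_s8 hRX hxR hr hre⟩

lemma connSet_union {P R : Set V} (hP : ConnSet G P) (hR : ConnSet G R)
    (hx : (P ∩ R).Nonempty) : ConnSet G (P ∪ R) := by
  obtain ⟨x, hxP, hxR⟩ := hx
  rw [ConnSet, SimpleGraph.connected_iff]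
  refine ⟨?_, ⟨⟨x, Or.inl hxP⟩⟩⟩
  have key : ∀ (u : V) (hu : u ∈ P ∪ R),
      (G.induce (P ∪ R)).Reachable ⟨u, hu⟩ ⟨x, Or.inl hxP⟩ := by
    intro u hu
    cases hu with
    | inl h => exact reach_mono_s8 subset_union_left h hxP (hP.preconnected _ _)
    | inr h => exact reach_mono_s8 subset_union_right h hxR (hR.preconnected _ _)
  rintro ⟨u, hu⟩ ⟨v, hv⟩
  exact (key u hu).trans (key v hv).symm

lemma connSet_insert_s8 {P : Set V} {q y : V} (hP : ConnSet G P) (hq : q ∈ P)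
    (hadj : G.Adj q y) : ConnSet G (insert y P) := by
  rw [ConnSet, SimpleGraph.connected_iff]
  refine ⟨?_, ⟨⟨q, Or.inr hq⟩⟩⟩
  have hPs : P ⊆ insert y P := subset_insert _ _
  have hyI : y ∈ insert y P := mem_insert _ _
  have key : ∀ (u : V) (hu : u ∈ insert y P),
      (G.induce (insert y P)).Reachable ⟨u, hu⟩ ⟨q, hPs hq⟩ := by
    intro u hu
    rcases mem_insert_iff.mp hu with heq | hu'
    · subst heq
      have hadj' : (G.induce (insert u P)).Adj ⟨u, hu⟩ ⟨q, hPs hq⟩ := hadj.symm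
      exact hadj'.reachable
    · exact reach_mono_s8 hPs hu' hq (hP.preconnected _ _)
  rintro ⟨u, hu⟩ ⟨v, hv⟩
  exact (key u hu).trans (key v hv).symm

lemma comp_closed {Q X : Set V} (hQ : IsCompOf G Q X) {q y : V} (hq : q ∈ Q) (hy : y ∈ X)
    (hadj : G.Adj q y) : y ∈ Q := by
  have h := hQ.2.2 (insert y Q) (subset_insert _ _) (insert_subset hy hQ.1)
    (connSet_insert_s8 hQ.2.1 hq hadj)
  rw [← h]; exact mem_insert _ _

lemma comp_exists_containing {X E : Set V} (hE : E ⊆ X) (hEconn : ConnSet G E)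
    (hEne : E.Nonempty) : ∃ Q, IsCompOf G Q X ∧ E ⊆ Q := by
  obtain ⟨x, hx⟩ := hEne
  obtain ⟨Q, hQ, hxQ⟩ := comp_exists_mem (G := G) (hE hx)
  have hconn : ConnSet G (Q ∪ E) := connSet_union hQ.2.1 hEconn ⟨x, hxQ, hx⟩
  have h2 : Q ∪ E = Q := hQ.2.2 _ subset_union_left (union_subset hQ.1 hE) hconn
  exact ⟨Q, hQ, fun e he => h2 ▸ (subset_union_right he : e ∈ Q ∪ E)⟩

lemma walk_stays {S D : Set V} (hdisj : S ∩ bdry G D = ∅) :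
    ∀ {u v : ↥S} (w : (G.induce S).Walk u v), (u : V) ∈ D → (v : V) ∈ D := by
  intro u v w
  induction w with
  | nil => exact id
  | @cons a b c h p ih =>
      intro ha
      apply ih
      by_contra hb
      have : (b : V) ∈ S ∩ bdry G D := ⟨b.2, hb, a, ha, h⟩
      rw [hdisj] at this
      exact this

lemma conn_subset_side {S D : Set V} (hS : ConnSet G S) (hdisj : S ∩ bdry G D = ∅) :
    S ⊆ D ∨ S ⊆ cstar G D := by
  by_cases hSD : ∃ s ∈ S, s ∈ D
  · left
    obtain ⟨s, hsS, hsD⟩ := hSD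
    intro v hv
    obtain ⟨w⟩ := hS.preconnected ⟨s, hsS⟩ ⟨v, hv⟩
    exact walk_stays hdisj w hsD
  · right
    push_neg at hSD
    intro v hv
    refine mem_cstar_iff.mpr ⟨hSD v hv, fun hb => ?_⟩
    have : v ∈ S ∩ bdry G D := ⟨hv, hb⟩
    rw [hdisj] at this
    exact this

end Infra

/-! ### System-level lemmas -/

section System

open Set SimpleGraph

variable {G : SimpleGraph V} {𝒞 : Set (Set V)} {κ : ℕ} {C D : Set V}

lemma bdry_eq_full (h : IsThinCutSystem G 𝒞 κ) {Q C : Set V} (hQ : Q ∈ 𝒞) (hC : C ∈ 𝒞)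
    (hsub : bdry G Q ⊆ bdry G C) : bdry G Q = bdry G C :=
  Set.eq_of_subset_of_ncard_le hsub
    (le_of_eq (by rw [h.thin Q hQ, h.thin C hC]))
    (h.toIsCutSystem.finBd C hC)

lemma link_kill (h : IsThinCutSystem G 𝒞 κ) {Q C : Set V} (hQ : Q ∈ 𝒞) (hC : C ∈ 𝒞)
    {T L : Set V} (hsub : bdry G Q ⊆ T) (hT : T ⊆ bdry G C) (hL : L ⊆ bdry G C)
    (hdisj : ∀ v ∈ L, v ∉ T) : L = ∅ := by
  have he : bdry G Q = bdry G C := bdry_eq_full h hQ hC (hsub.trans hT)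
  ext v
  simp only [mem_empty_iff_false, iff_false]
  intro hv
  have h1 : v ∈ bdry G Q := he ▸ hL hv
  exact hdisj v hv (hsub h1)

lemma bdry_comp_sub {s1 s2 Q : Set V}
    (h1 : s1 = C ∨ s1 = cstar G C) (h2 : s2 = D ∨ s2 = cstar G D)
    (hQ : IsCompOf G Q (s1 ∩ s2)) :
    bdry G Q ⊆ (s1 ∩ bdry G D) ∪ (s2 ∩ bdry G C) ∪ (bdry G C ∩ bdry G D) := by
  rintro y ⟨hyQ, x, hxQ, hadj⟩
  obtain ⟨hx1, hx2⟩ := hQ.1 hxQ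
  have hy1 : y ∈ s1 ∨ y ∈ bdry G C := by
    rcases side_tri G C y with hyC | hyN | hyS
    · rcases h1 with rfl | rfl
      · exact Or.inl hyC
      · exact absurd hadj.symm (not_adj_of_cstar hyC hx1)
    · exact Or.inr hyN
    · rcases h1 with rfl | rfl
      · exact absurd hadj (not_adj_of_cstar hx1 hyS)
      · exact Or.inl hyS
  have hy2 : y ∈ s2 ∨ y ∈ bdry G D := by
    rcases side_tri G D y with hyD | hyN | hyS
    · rcases h2 with rfl | rfl
      · exact Or.inl hyD
      · exact absurd hadj.symm (not_adj_of_cstar hyD hx2)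
    · exact Or.inr hyN
    · rcases h2 with rfl | rfl
      · exact absurd hadj (not_adj_of_cstar hx2 hyS)
      · exact Or.inl hyS
  rcases hy1 with hy1 | hy1 <;> rcases hy2 with hy2 | hy2
  · exact absurd (comp_closed hQ hxQ ⟨hy1, hy2⟩ hadj) hyQ
  · exact Or.inl (Or.inl ⟨hy1, hy2⟩)
  · exact Or.inl (Or.inr ⟨hy2, hy1⟩)
  · exact Or.inr ⟨hy1, hy2⟩

lemma corner_comp_cut (h : IsThinCutSystem G 𝒞 κ) {A B : Set V} (hC : C ∈ 𝒞) (hD : D ∈ 𝒞)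
    (hopp : OppCorners G C D A B) (hA : ∃ E ∈ 𝒞, E ⊆ A) (hB : ∃ E ∈ 𝒞, E ⊆ B) :
    ∃ Q, Q ∈ 𝒞 ∧ IsCompOf G Q B := by
  obtain ⟨E, hE, hEB⟩ := hB
  obtain ⟨Q, hQcomp, hEQ⟩ := comp_exists_containing hEB (h.toIsCutSystem.conn E hE)
    (h.toIsCutSystem.nonempty E hE)
  exact ⟨Q, h.toIsCutSystem.a1 C hC D hD A B hopp hA ⟨E, hE, hEB⟩ Q (Or.inr hQcomp)
    ⟨E, hE, hEQ⟩, hQcomp⟩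

lemma nd_sub_nc (ha : C ∩ bdry G D = ∅) (hc : cstar G C ∩ bdry G D = ∅) :
    bdry G D ⊆ bdry G C := by
  intro v hv
  rcases side_tri G C v with h1 | h1 | h1
  · have hm : v ∈ C ∩ bdry G D := ⟨h1, hv⟩
    rw [ha] at hm; exact absurd hm (notMem_empty v)
  · exact h1
  · have hm : v ∈ cstar G C ∩ bdry G D := ⟨h1, hv⟩
    rw [hc] at hm; exact absurd hm (notMem_empty v)

lemma nd_eq_nc (h : IsThinCutSystem G 𝒞 κ) (hC : C ∈ 𝒞) (hD : D ∈ 𝒞)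
    (ha : C ∩ bdry G D = ∅) (hc : cstar G C ∩ bdry G D = ∅) : bdry G D = bdry G C :=
  Set.eq_of_subset_of_ncard_le (nd_sub_nc ha hc)
    (le_of_eq (by rw [h.thin C hC, h.thin D hD]))
    (h.toIsCutSystem.finBd C hC)

lemma sub_links {C D : Set V} (hsub : C ⊆ D) :
    cstar G D ∩ bdry G C = ∅ ∧ C ∩ cstar G D = ∅ := by
  constructor
  · ext v
    simp only [mem_inter_iff, mem_empty_iff_false, iff_false, not_and]
    rintro hv ⟨hvC, u, huC, hadj⟩
    exact not_adj_of_cstar (hsub huC) hv hadj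
  · ext x
    simp only [mem_inter_iff, mem_empty_iff_false, iff_false, not_and]
    intro hxC hxS
    exact (mem_cstar_iff.mp hxS).1 (hsub hxC)

lemma sub_star_links {C D : Set V} (hsub : C ⊆ cstar G D) :
    D ∩ bdry G C = ∅ ∧ C ∩ D = ∅ := by
  constructor
  · ext v
    simp only [mem_inter_iff, mem_empty_iff_false, iff_false, not_and]
    rintro hvD ⟨hvC, u, huC, hadj⟩
    exact not_adj_of_cstar hvD (hsub huC) hadj.symm
  · ext x
    simp only [mem_inter_iff, mem_empty_iff_false, iff_false, not_and]
    intro hxC hxD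
    exact (mem_cstar_iff.mp (hsub hxC)).1 hxD

lemma a2_cases (h : IsThinCutSystem G 𝒞 κ) (hC : C ∈ 𝒞) (hD : D ∈ 𝒞) :
    ((∃ E ∈ 𝒞, E ⊆ C ∩ D) ∧ (∃ E ∈ 𝒞, E ⊆ cstar G C ∩ cstar G D)) ∨
    ((∃ E ∈ 𝒞, E ⊆ C ∩ cstar G D) ∧ (∃ E ∈ 𝒞, E ⊆ cstar G C ∩ D)) := by
  obtain ⟨A, B, hopp, hA, hB⟩ := h.toIsCutSystem.a2 C hC D hD
  rcases hopp with ⟨rfl, rfl⟩ | ⟨rfl, rfl⟩ | ⟨rfl, rfl⟩ | ⟨rfl, rfl⟩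
  · exact Or.inl ⟨hA, hB⟩
  · exact Or.inl ⟨hB, hA⟩
  · exact Or.inr ⟨hA, hB⟩
  · exact Or.inr ⟨hB, hA⟩

lemma no_cut_empty (h : IsThinCutSystem G 𝒞 κ) {A : Set V} (hA : A = ∅) :
    ¬ ∃ E ∈ 𝒞, E ⊆ A := by
  rintro ⟨E, hE, hEA⟩
  obtain ⟨x, hx⟩ := h.toIsCutSystem.nonempty E hE
  rw [hA] at hEA
  exact absurd (hEA hx) (notMem_empty x)

lemma kill_a (h : IsThinCutSystem G 𝒞 κ) (hC : C ∈ 𝒞) (hD : D ∈ 𝒞)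
    (hp : ∃ E ∈ 𝒞, E ⊆ C ∩ D) (hq : ∃ E ∈ 𝒞, E ⊆ cstar G C ∩ cstar G D)
    (hb : cstar G D ∩ bdry G C = ∅) : C ∩ bdry G D = ∅ := by
  obtain ⟨Q, hQ, hQcomp⟩ := corner_comp_cut h hC hD (Or.inl ⟨rfl, rfl⟩) hp hq
  have hsub : bdry G Q ⊆ (cstar G C ∩ bdry G D) ∪ (bdry G C ∩ bdry G D) := by
    intro v hv
    rcases bdry_comp_sub (Or.inr rfl) (Or.inr rfl) hQcomp hv with (hv1 | hv2) | hv3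
    · exact Or.inl hv1
    · rw [hb] at hv2; exact absurd hv2 (notMem_empty v)
    · exact Or.inr hv3
  refine link_kill h hQ hD hsub ?_ (fun v hv => hv.2) ?_
  · rintro v (hv | hv)
    · exact hv.2
    · exact hv.2
  · rintro v hv (hT | hT)
    · exact (mem_cstar_iff.mp hT.1).1 hv.1
    · exact hT.1.1 hv.1

lemma kill_d (h : IsThinCutSystem G 𝒞 κ) (hC : C ∈ 𝒞) (hD : D ∈ 𝒞)
    (hp : ∃ E ∈ 𝒞, E ⊆ C ∩ D) (hq : ∃ E ∈ 𝒞, E ⊆ cstar G C ∩ cstar G D)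
    (hc : cstar G C ∩ bdry G D = ∅) : D ∩ bdry G C = ∅ := by
  obtain ⟨Q, hQ, hQcomp⟩ := corner_comp_cut h hC hD (Or.inl ⟨rfl, rfl⟩) hp hq
  have hsub : bdry G Q ⊆ (cstar G D ∩ bdry G C) ∪ (bdry G C ∩ bdry G D) := by
    intro v hv
    rcases bdry_comp_sub (Or.inr rfl) (Or.inr rfl) hQcomp hv with (hv1 | hv2) | hv3
    · rw [hc] at hv1; exact absurd hv1 (notMem_empty v)
    · exact Or.inl hv2
    · exact Or.inr hv3
  refine link_kill h hQ hC hsub ?_ (fun v hv => hv.2) ?_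
  · rintro v (hv | hv)
    · exact hv.2
    · exact hv.1
  · rintro v hv (hT | hT)
    · exact (mem_cstar_iff.mp hT.1).1 hv.1
    · exact hT.2.1 hv.1

lemma kill_b (h : IsThinCutSystem G 𝒞 κ) (hC : C ∈ 𝒞) (hD : D ∈ 𝒞)
    (hr : ∃ E ∈ 𝒞, E ⊆ C ∩ cstar G D) (hs : ∃ E ∈ 𝒞, E ⊆ cstar G C ∩ D)
    (hc : cstar G C ∩ bdry G D = ∅) : cstar G D ∩ bdry G C = ∅ := by
  obtain ⟨Q, hQ, hQcomp⟩ := corner_comp_cut h hC hD (Or.inr (Or.inr (Or.inl ⟨rfl, rfl⟩))) hr hs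
  have hsub : bdry G Q ⊆ (D ∩ bdry G C) ∪ (bdry G C ∩ bdry G D) := by
    intro v hv
    rcases bdry_comp_sub (Or.inr rfl) (Or.inl rfl) hQcomp hv with (hv1 | hv2) | hv3
    · rw [hc] at hv1; exact absurd hv1 (notMem_empty v)
    · exact Or.inl hv2
    · exact Or.inr hv3
  refine link_kill h hQ hC hsub ?_ (fun v hv => hv.2) ?_
  · rintro v (hv | hv)
    · exact hv.2
    · exact hv.1
  · rintro v hv (hT | hT)
    · exact (mem_cstar_iff.mp hv.1).1 hT.1
    · exact (mem_cstar_iff.mp hv.1).2 hT.2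

lemma kill_c (h : IsThinCutSystem G 𝒞 κ) (hC : C ∈ 𝒞) (hD : D ∈ 𝒞)
    (hr : ∃ E ∈ 𝒞, E ⊆ C ∩ cstar G D) (hs : ∃ E ∈ 𝒞, E ⊆ cstar G C ∩ D)
    (hb : cstar G D ∩ bdry G C = ∅) : cstar G C ∩ bdry G D = ∅ := by
  obtain ⟨Q, hQ, hQcomp⟩ := corner_comp_cut h hC hD (Or.inr (Or.inr (Or.inr ⟨rfl, rfl⟩))) hs hr
  have hsub : bdry G Q ⊆ (C ∩ bdry G D) ∪ (bdry G C ∩ bdry G D) := by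
    intro v hv
    rcases bdry_comp_sub (Or.inl rfl) (Or.inr rfl) hQcomp hv with (hv1 | hv2) | hv3
    · exact Or.inl hv1
    · rw [hb] at hv2; exact absurd hv2 (notMem_empty v)
    · exact Or.inr hv3
  refine link_kill h hQ hD hsub ?_ (fun v hv => hv.2) ?_
  · rintro v (hv | hv)
    · exact hv.2
    · exact hv.2
  · rintro v hv (hT | hT)
    · exact (mem_cstar_iff.mp hv.1).1 hT.1
    · exact (mem_cstar_iff.mp hv.1).2 hT.1

lemma no_cut_in_star_corner (h : IsThinCutSystem G 𝒞 κ) (hC : C ∈ 𝒞) (hD : D ∈ 𝒞)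
    (hc : cstar G C ∩ bdry G D = ∅) (hd : D ∩ bdry G C ≠ ∅) :
    ¬ ∃ E ∈ 𝒞, E ⊆ cstar G C ∩ cstar G D := by
  rintro ⟨F, hF, hFsub⟩
  have hFC : F ⊆ cstar G C := fun x hx => (hFsub hx).1
  have hFne := h.toIsCutSystem.nonempty F hF
  obtain ⟨QF, hQF, hFQ⟩ := comp_exists_containing hFC (h.toIsCutSystem.conn F hF) hFne
  have hself : cstar G C ∩ cstar G C = cstar G C := Set.inter_self _
  have hQF' : IsCompOf G QF (cstar G C ∩ cstar G C) := by rw [hself]; exact hQF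
  have hQFcut : QF ∈ 𝒞 := h.toIsCutSystem.a1 C hC C hC (C ∩ C) (cstar G C ∩ cstar G C)
    (Or.inl ⟨rfl, rfl⟩) ⟨C, hC, fun x hx => ⟨hx, hx⟩⟩
    ⟨F, hF, by rw [hself]; exact hFC⟩ QF (Or.inr hQF') ⟨F, hF, hFQ⟩
  have hQFD : QF ⊆ cstar G D := by
    have hdisj : QF ∩ bdry G D = ∅ := by
      have hsub : QF ∩ bdry G D ⊆ cstar G C ∩ bdry G D := fun v hv => ⟨hQF.1 hv.1, hv.2⟩
      rw [hc] at hsub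
      exact subset_empty_iff.mp hsub
    rcases conn_subset_side hQF.2.1 hdisj with hsub | hsub
    · obtain ⟨x, hx⟩ := hFne
      exact absurd (hsub (hFQ hx)) (mem_cstar_iff.mp (hFsub hx).2).1
    · exact hsub
  have hbd : bdry G QF ⊆ {v | v ∈ bdry G C ∧ v ∉ D} := by
    rintro y ⟨hyQ, x, hxQ, hadj⟩
    constructor
    · rcases side_tri G C y with hyC | hyN | hyS
      · exact absurd hadj.symm (not_adj_of_cstar hyC (hQF.1 hxQ))
      · exact hyN
      · exact absurd (comp_closed hQF hxQ hyS hadj) hyQ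
    · intro hyD
      exact not_adj_of_cstar hyD (hQFD hxQ) hadj.symm
  exact hd (link_kill h hQFcut hC hbd (fun v hv => hv.1) (fun v hv => hv.2)
    (fun v hv hT => hT.2 hv.1))

end System

/-! ### Main pieces -/

section Main

open Set SimpleGraph

variable {G : SimpleGraph V} {𝒞 : Set (Set V)} {κ : ℕ} {C D : Set V}

lemma part2_CD (h : IsThinCutSystem G 𝒞 κ) (hC : C ∈ 𝒞) (hD : D ∈ 𝒞)
    (hNo : ¬ ∃ E ∈ 𝒞, E ⊆ C ∩ D)
    (hor : C ∩ bdry G D = ∅ ∨ D ∩ bdry G C = ∅) :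
    C ∩ bdry G D = ∅ ∧ D ∩ bdry G C = ∅ := by
  rcases hor with ha | hd
  · refine ⟨ha, ?_⟩
    rcases conn_subset_side (h.toIsCutSystem.conn C hC) ha with hsub | hsub
    · exact absurd ⟨C, hC, fun x hx => ⟨hx, hsub hx⟩⟩ hNo
    · exact (sub_star_links hsub).1
  · refine ⟨?_, hd⟩
    rcases conn_subset_side (h.toIsCutSystem.conn D hD) hd with hsub | hsub
    · exact absurd ⟨D, hD, fun x hx => ⟨hsub hx, hx⟩⟩ hNo
    · exact (sub_star_links (C := D) (D := C) hsub).1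

lemma part2_CDs (h : IsThinCutSystem G 𝒞 κ) (hC : C ∈ 𝒞) (hD : D ∈ 𝒞)
    (hNo : ¬ ∃ E ∈ 𝒞, E ⊆ C ∩ cstar G D)
    (hor : C ∩ bdry G D = ∅ ∨ cstar G D ∩ bdry G C = ∅) :
    C ∩ bdry G D = ∅ ∧ cstar G D ∩ bdry G C = ∅ := by
  rcases hor with ha | hb
  · refine ⟨ha, ?_⟩
    rcases conn_subset_side (h.toIsCutSystem.conn C hC) ha with hsub | hsub
    · exact (sub_links hsub).1
    · exact absurd ⟨C, hC, fun x hx => ⟨hx, hsub hx⟩⟩ hNo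
  · refine ⟨?_, hb⟩
    rcases a2_cases h hC hD with ⟨hp, hq⟩ | ⟨hr, hs⟩
    · exact kill_a h hC hD hp hq hb
    · exact absurd hr hNo

lemma part2_CsD (h : IsThinCutSystem G 𝒞 κ) (hC : C ∈ 𝒞) (hD : D ∈ 𝒞)
    (hNo : ¬ ∃ E ∈ 𝒞, E ⊆ cstar G C ∩ D)
    (hor : cstar G C ∩ bdry G D = ∅ ∨ D ∩ bdry G C = ∅) :
    cstar G C ∩ bdry G D = ∅ ∧ D ∩ bdry G C = ∅ := by
  rcases hor with hc | hd
  · refine ⟨hc, ?_⟩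
    rcases a2_cases h hC hD with ⟨hp, hq⟩ | ⟨hr, hs⟩
    · exact kill_d h hC hD hp hq hc
    · exact absurd hs hNo
  · refine ⟨?_, hd⟩
    rcases conn_subset_side (h.toIsCutSystem.conn D hD) hd with hsub | hsub
    · exact (sub_links (C := D) (D := C) hsub).1
    · exact absurd ⟨D, hD, fun x hx => ⟨hsub hx, hx⟩⟩ hNo

lemma part2_CsDs (h : IsThinCutSystem G 𝒞 κ) (hC : C ∈ 𝒞) (hD : D ∈ 𝒞)
    (hNo : ¬ ∃ E ∈ 𝒞, E ⊆ cstar G C ∩ cstar G D)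
    (hor : cstar G C ∩ bdry G D = ∅ ∨ cstar G D ∩ bdry G C = ∅) :
    cstar G C ∩ bdry G D = ∅ ∧ cstar G D ∩ bdry G C = ∅ := by
  rcases a2_cases h hC hD with ⟨hp, hq⟩ | ⟨hr, hs⟩
  · exact absurd hq hNo
  · rcases hor with hc | hb
    · exact ⟨hc, kill_b h hC hD hr hs hc⟩
    · exact ⟨kill_c h hC hD hr hs hb, hb⟩

lemma part1 (h : IsThinCutSystem G 𝒞 κ) (hC : C ∈ 𝒞) (hD : D ∈ 𝒞) :
    ((C ∩ bdry G D ≠ ∅ ∧ cstar G C ∩ bdry G D ≠ ∅ ∧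
      D ∩ bdry G C ≠ ∅ ∧ cstar G D ∩ bdry G C ≠ ∅) ∨
     ((C ∩ bdry G D = ∅ ∧ D ∩ bdry G C = ∅ ∧
        cstar G C ∩ bdry G D ≠ ∅ ∧ cstar G D ∩ bdry G C ≠ ∅ ∧
        IsolatedCorner G 𝒞 C D (C ∩ D)) ∨
      (C ∩ bdry G D = ∅ ∧ cstar G D ∩ bdry G C = ∅ ∧
        cstar G C ∩ bdry G D ≠ ∅ ∧ D ∩ bdry G C ≠ ∅ ∧
        IsolatedCorner G 𝒞 C D (C ∩ cstar G D)) ∨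
      (cstar G C ∩ bdry G D = ∅ ∧ D ∩ bdry G C = ∅ ∧
        C ∩ bdry G D ≠ ∅ ∧ cstar G D ∩ bdry G C ≠ ∅ ∧
        IsolatedCorner G 𝒞 C D (cstar G C ∩ D)) ∨
      (cstar G C ∩ bdry G D = ∅ ∧ cstar G D ∩ bdry G C = ∅ ∧
        C ∩ bdry G D ≠ ∅ ∧ D ∩ bdry G C ≠ ∅ ∧
        IsolatedCorner G 𝒞 C D (cstar G C ∩ cstar G D))) ∨
     (C ∩ bdry G D = ∅ ∧ cstar G C ∩ bdry G D = ∅ ∧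
      D ∩ bdry G C = ∅ ∧ cstar G D ∩ bdry G C = ∅ ∧
      (((∃ E ∈ 𝒞, E ⊆ C ∩ D) ∧ (∃ E ∈ 𝒞, E ⊆ cstar G C ∩ cstar G D)) ∨
       ((∃ E ∈ 𝒞, E ⊆ C ∩ cstar G D) ∧ (∃ E ∈ 𝒞, E ⊆ cstar G C ∩ D))) ∧
      (C ∩ D = ∅ ∨ C ∩ cstar G D = ∅ ∨ cstar G C ∩ D = ∅ ∨
        cstar G C ∩ cstar G D = ∅))) := by
  by_cases ha : C ∩ bdry G D = ∅
  · rcases conn_subset_side (h.toIsCutSystem.conn C hC) ha with hsub | hsub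
    · -- C ⊆ D
      obtain ⟨hb, hCDs⟩ := sub_links hsub
      by_cases hc : cstar G C ∩ bdry G D = ∅
      · have hnd := nd_eq_nc h hC hD ha hc
        have hd : D ∩ bdry G C = ∅ := by rw [← hnd]; exact inter_bdry_self G D
        exact Or.inr (Or.inr ⟨ha, hc, hd, hb, a2_cases h hC hD, Or.inr (Or.inl hCDs)⟩)
      · have hd : D ∩ bdry G C ≠ ∅ := by
          intro hd0
          have hncd := nd_eq_nc h hD hC hd0 hb
          exact hc (by rw [← hncd]; exact cstar_inter_bdry_self G C)
        exact Or.inr (Or.inl (Or.inr (Or.inl ⟨ha, hb, hc, hd,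
          no_cut_empty h hCDs, Or.inr (Or.inl ⟨rfl, ha, hb⟩)⟩)))
    · -- C ⊆ cstar D
      obtain ⟨hd, hCD⟩ := sub_star_links hsub
      by_cases hc : cstar G C ∩ bdry G D = ∅
      · have hnd := nd_eq_nc h hC hD ha hc
        have hb : cstar G D ∩ bdry G C = ∅ := by rw [← hnd]; exact cstar_inter_bdry_self G D
        exact Or.inr (Or.inr ⟨ha, hc, hd, hb, a2_cases h hC hD, Or.inl hCD⟩)
      · have hb : cstar G D ∩ bdry G C ≠ ∅ := by
          intro hb0
          have hncd := nd_eq_nc h hD hC hd hb0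
          exact hc (by rw [← hncd]; exact cstar_inter_bdry_self G C)
        exact Or.inr (Or.inl (Or.inl ⟨ha, hd, hc, hb, no_cut_empty h hCD,
          Or.inl ⟨rfl, ha, hd⟩⟩))
  · by_cases hd : D ∩ bdry G C = ∅
    · rcases conn_subset_side (h.toIsCutSystem.conn D hD) hd with hsub | hsub
      · -- D ⊆ C
        obtain ⟨hc, hDCs⟩ := sub_links (C := D) (D := C) hsub
        have hcorner : cstar G C ∩ D = ∅ := by rw [inter_comm]; exact hDCs
        have hb : cstar G D ∩ bdry G C ≠ ∅ := by
          intro hb0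
          have hncd := nd_eq_nc h hD hC hd hb0
          exact ha (by rw [← hncd]; exact inter_bdry_self G C)
        exact Or.inr (Or.inl (Or.inr (Or.inr (Or.inl ⟨hc, hd, ha, hb,
          no_cut_empty h hcorner, Or.inr (Or.inr (Or.inl ⟨rfl, hc, hd⟩))⟩))))
      · -- D ⊆ cstar C : contradicts a ≠ ∅
        exact absurd (sub_star_links (C := D) (D := C) hsub).1 ha
    · by_cases hc : cstar G C ∩ bdry G D = ∅
      · rcases a2_cases h hC hD with ⟨hp, hq⟩ | ⟨hr, hs⟩
        · exact absurd (kill_d h hC hD hp hq hc) hd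
        · have hb : cstar G D ∩ bdry G C = ∅ := kill_b h hC hD hr hs hc
          have hnq := no_cut_in_star_corner h hC hD hc hd
          exact Or.inr (Or.inl (Or.inr (Or.inr (Or.inr ⟨hc, hb, ha, hd, hnq,
            Or.inr (Or.inr (Or.inr ⟨rfl, hc, hb⟩))⟩))))
      · by_cases hb : cstar G D ∩ bdry G C = ∅
        · rcases a2_cases h hC hD with ⟨hp, hq⟩ | ⟨hr, hs⟩
          · exact absurd (kill_a h hC hD hp hq hb) ha
          · exact absurd (kill_c h hC hD hr hs hb) hc
        · exact Or.inl ⟨ha, hc, hd, hb⟩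

end Main
theorem stmt8 (G : SimpleGraph V) (hG : G.Connected) (𝒞 : Set (Set V)) (κ : ℕ)
    (h : IsThinCutSystem G 𝒞 κ) (C D : Set V) (hC : C ∈ 𝒞) (hD : D ∈ 𝒞) :
    -- trichotomy for the links `a = C ∩ ND`, `c = C* ∩ ND`, `d = D ∩ NC`, `b = D* ∩ NC`
    ((C ∩ bdry G D ≠ ∅ ∧ cstar G C ∩ bdry G D ≠ ∅ ∧
      D ∩ bdry G C ≠ ∅ ∧ cstar G D ∩ bdry G C ≠ ∅) ∨
     -- exactly two links empty, adjacent, with isolated adjacent corner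
     ((C ∩ bdry G D = ∅ ∧ D ∩ bdry G C = ∅ ∧
        cstar G C ∩ bdry G D ≠ ∅ ∧ cstar G D ∩ bdry G C ≠ ∅ ∧
        IsolatedCorner G 𝒞 C D (C ∩ D)) ∨
      (C ∩ bdry G D = ∅ ∧ cstar G D ∩ bdry G C = ∅ ∧
        cstar G C ∩ bdry G D ≠ ∅ ∧ D ∩ bdry G C ≠ ∅ ∧
        IsolatedCorner G 𝒞 C D (C ∩ cstar G D)) ∨
      (cstar G C ∩ bdry G D = ∅ ∧ D ∩ bdry G C = ∅ ∧
        C ∩ bdry G D ≠ ∅ ∧ cstar G D ∩ bdry G C ≠ ∅ ∧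
        IsolatedCorner G 𝒞 C D (cstar G C ∩ D)) ∨
      (cstar G C ∩ bdry G D = ∅ ∧ cstar G D ∩ bdry G C = ∅ ∧
        C ∩ bdry G D ≠ ∅ ∧ D ∩ bdry G C ≠ ∅ ∧
        IsolatedCorner G 𝒞 C D (cstar G C ∩ cstar G D))) ∨
     -- all four links empty, opposite corners contain cuts, some corner empty
     (C ∩ bdry G D = ∅ ∧ cstar G C ∩ bdry G D = ∅ ∧
      D ∩ bdry G C = ∅ ∧ cstar G D ∩ bdry G C = ∅ ∧
      (((∃ E ∈ 𝒞, E ⊆ C ∩ D) ∧ (∃ E ∈ 𝒞, E ⊆ cstar G C ∩ cstar G D)) ∨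
       ((∃ E ∈ 𝒞, E ⊆ C ∩ cstar G D) ∧ (∃ E ∈ 𝒞, E ⊆ cstar G C ∩ D))) ∧
      (C ∩ D = ∅ ∨ C ∩ cstar G D = ∅ ∨ cstar G C ∩ D = ∅ ∨
        cstar G C ∩ cstar G D = ∅))) ∧
    -- a corner with no cut and one empty link has both links empty
    ((¬ ∃ E ∈ 𝒞, E ⊆ C ∩ D) →
      (C ∩ bdry G D = ∅ ∨ D ∩ bdry G C = ∅) →
      C ∩ bdry G D = ∅ ∧ D ∩ bdry G C = ∅) ∧
    ((¬ ∃ E ∈ 𝒞, E ⊆ C ∩ cstar G D) →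
      (C ∩ bdry G D = ∅ ∨ cstar G D ∩ bdry G C = ∅) →
      C ∩ bdry G D = ∅ ∧ cstar G D ∩ bdry G C = ∅) ∧
    ((¬ ∃ E ∈ 𝒞, E ⊆ cstar G C ∩ D) →
      (cstar G C ∩ bdry G D = ∅ ∨ D ∩ bdry G C = ∅) →
      cstar G C ∩ bdry G D = ∅ ∧ D ∩ bdry G C = ∅) ∧
    ((¬ ∃ E ∈ 𝒞, E ⊆ cstar G C ∩ cstar G D) →
      (cstar G C ∩ bdry G D = ∅ ∨ cstar G D ∩ bdry G C = ∅) →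
      cstar G C ∩ bdry G D = ∅ ∧ cstar G D ∩ bdry G C = ∅) := by
  exact ⟨part1 h hC hD, part2_CD h hC hD, part2_CDs h hC hD, part2_CsD h hC hD,
    part2_CsDs h hC hD⟩
end
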